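/- Let F be a finite field of characteristic p and let G be a subgroup of GL₂(F) such that G contains a Sylow p-subgroup of GL₂(F) and G acts irreducibly on F². Then SL₂(F) ⊆ G. -/

import Mathlib

/-!
The upper unitriangular group `U = {[1, x; 0, 1]}` has order `q = |F|` and index
`(q² - 1)(q - 1)` in `GL₂(F)`, so it is a Sylow `p`-subgroup and `G` contains a conjugate
`g U g⁻¹`. After conjugating by `g` we may assume `U ≤ G`. Irreducibility forbids `G` to fix the
line `F e₀`, so some `h ∈ G` has `h₁₀ ≠ 0`; multiplying `h` on the left by an element of `U` kills
`h₀₀`, and then `h U h⁻¹` is the lower unitriangular group. Finally every matrix of determinant one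
is a product of upper and lower unitriangular matrices.
-/

open Matrix Matrix.GeneralLinearGroup

@[simps apply]
def lowerLeftHom {R : Type*} [Ring R] : AddChar R (GL (Fin 2) R) where
  toFun x := ⟨!![1, 0; x, 1], !![1, 0; -x, 1], by simp [one_fin_two], by simp [one_fin_two]⟩
  map_zero_eq_one' := by simp [Units.ext_iff, one_fin_two]
  map_add_eq_mul' a b := by simp [Units.ext_iff, add_comm]

def upperUnitriangular (R : Type*) [Ring R] : Subgroup (GL (Fin 2) R) where
  carrier := Set.range upperRightHom
  one_mem' := ⟨0, AddChar.map_zero_eq_one _⟩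
  mul_mem' := by
    rintro _ _ ⟨a, rfl⟩ ⟨b, rfl⟩
    exact ⟨a + b, AddChar.map_add_eq_mul _ a b⟩
  inv_mem' := by
    rintro _ ⟨a, rfl⟩
    exact ⟨-a, AddChar.map_neg_eq_inv _ a⟩

def ActsIrreducibly {F : Type*} [Field F] {n : ℕ} (G : Subgroup (GL (Fin n) F)) : Prop :=
  ∀ W : Submodule F (Fin n → F),
    (∀ A ∈ G, ∀ v ∈ W, (A : Matrix (Fin n) (Fin n) F).mulVec v ∈ W) → W = ⊥ ∨ W = ⊤

section Field

variable {F : Type*} [Field F]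

theorem eq_upperRightHom_mul_lowerLeftHom_mul_upperRightHom (A : GL (Fin 2) F)
    (hdet : (A : Matrix (Fin 2) (Fin 2) F).det = 1) (hc : A 1 0 ≠ 0) :
    A = upperRightHom ((A 0 0 - 1) / A 1 0) * lowerLeftHom (A 1 0) *
      upperRightHom ((A 1 1 - 1) / A 1 0) := by
  rw [det_fin_two] at hdet
  ext i j
  fin_cases i <;> fin_cases j <;> simp <;> field_simp <;> grind

theorem mem_of_det_eq_one_of_unitriangular_mem {H : Subgroup (GL (Fin 2) F)}
    (hU : ∀ x, upperRightHom x ∈ H) (hL : ∀ x, lowerLeftHom x ∈ H) {A : GL (Fin 2) F}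
    (hdet : (A : Matrix (Fin 2) (Fin 2) F).det = 1) : A ∈ H := by
  have of_ne_zero (B : GL (Fin 2) F) (hB : (B : Matrix (Fin 2) (Fin 2) F).det = 1)
      (hc : B 1 0 ≠ 0) : B ∈ H := by
    rw [eq_upperRightHom_mul_lowerLeftHom_mul_upperRightHom B hB hc]
    exact mul_mem (mul_mem (hU _) (hL _)) (hU _)
  by_cases hc : A 1 0 = 0
  · have h00 : A 0 0 ≠ 0 := fun h ↦ by simp [det_fin_two, h, hc] at hdet
    have hLA : lowerLeftHom 1 * A ∈ H :=
      of_ne_zero _ (by rw [Units.val_mul, det_mul, hdet]; simp [det_fin_two])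
        (by simpa [mul_apply, hc] using h00)
    have hA : lowerLeftHom (-1) * (lowerLeftHom 1 * A) = A := by
      rw [← mul_assoc, ← AddChar.map_add_eq_mul, neg_add_cancel, AddChar.map_zero_eq_one, one_mul]
    exact hA ▸ mul_mem (hL (-1)) hLA
  · exact of_ne_zero A hdet hc

theorem conj_upperRightHom_eq_lowerLeftHom (M : GL (Fin 2) F) (h00 : M 0 0 = 0)
    (h10 : M 1 0 ≠ 0) (x : F) :
    M * upperRightHom (x * M 0 1 / M 1 0) * M⁻¹ = lowerLeftHom x := by
  rw [mul_inv_eq_iff_eq_mul]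
  ext i j
  fin_cases i <;> fin_cases j <;> simp [mul_apply, h00]
  field_simp

theorem mem_of_det_eq_one_of_upperRightHom_mem {H : Subgroup (GL (Fin 2) F)}
    (hU : ∀ x, upperRightHom x ∈ H) {h : GL (Fin 2) F} (hh : h ∈ H) (h10 : h 1 0 ≠ 0)
    {A : GL (Fin 2) F} (hdet : (A : Matrix (Fin 2) (Fin 2) F).det = 1) : A ∈ H := by
  set M := upperRightHom (-(h 0 0 / h 1 0)) * h
  have hM : M ∈ H := mul_mem (hU _) hh
  have M00 : M 0 0 = 0 := by simp [M, mul_apply, div_mul_cancel₀ _ h10]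
  have M10 : M 1 0 = h 1 0 := by simp [M, mul_apply]
  refine mem_of_det_eq_one_of_unitriangular_mem hU (fun x ↦ ?_) hdet
  rw [← conj_upperRightHom_eq_lowerLeftHom M M00 (M10 ▸ h10) x]
  exact mul_mem (mul_mem hM (hU _)) (inv_mem hM)

theorem mulVec_single_zero_of_apply_one_zero_eq_zero {M : Matrix (Fin 2) (Fin 2) F}
    (h : M 1 0 = 0) : M *ᵥ Pi.single 0 1 = M 0 0 • Pi.single 0 1 := by
  ext i
  fin_cases i <;> simp [h]

theorem ActsIrreducibly.exists_conj_apply_one_zero_ne_zero {G : Subgroup (GL (Fin 2) F)}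
    (hirr : ActsIrreducibly G) (g : GL (Fin 2) F) : ∃ h ∈ G, (g⁻¹ * h * g) 1 0 ≠ 0 := by
  by_contra! hfix
  set v := (g : Matrix (Fin 2) (Fin 2) F) *ᵥ Pi.single 0 1
  have hv : v ≠ 0 := by
    rw [Ne, ← mulVec_zero (g : Matrix (Fin 2) (Fin 2) F),
      (mulVec_injective_of_isUnit g.isUnit).eq_iff]
    simp
  have hinv : ∀ A ∈ G, ∀ w ∈ Submodule.span F {v},
      (A : Matrix (Fin 2) (Fin 2) F) *ᵥ w ∈ Submodule.span F {v} := by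
    rintro A hA w hw
    obtain ⟨c, rfl⟩ := Submodule.mem_span_singleton.mp hw
    rw [mulVec_smul]
    refine Submodule.smul_mem _ c (Submodule.mem_span_singleton.mpr ⟨(g⁻¹ * A * g) 0 0, ?_⟩)
    have hAg : (A : Matrix (Fin 2) (Fin 2) F) * g = g * (g⁻¹ * A * g : GL (Fin 2) F) := by
      simp [← mul_assoc]
    rw [mulVec_mulVec, hAg, ← mulVec_mulVec,
      mulVec_single_zero_of_apply_one_zero_eq_zero (hfix A hA), mulVec_smul]
  rcases hirr _ hinv with h | h
  · exact hv (Submodule.span_singleton_eq_bot.mp h)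
  · have := finrank_span_singleton (K := F) hv
    rw [h, finrank_top, Module.finrank_fin_fun] at this
    omega

end Field

section FiniteField

variable {F : Type*} [Field F] [Fintype F]

theorem card_upperUnitriangular : Nat.card (upperUnitriangular F) = Fintype.card F := by
  rw [← Nat.card_eq_fintype_card]
  exact Nat.card_range_of_injective injective_upperRightHom

theorem index_upperUnitriangular :
    (upperUnitriangular F).index = (Fintype.card F ^ 2 - 1) * (Fintype.card F - 1) := by
  have h := (upperUnitriangular F).card_mul_index
  rw [card_GL_field, card_upperUnitriangular, Fin.prod_univ_two] at h
  refine Nat.eq_of_mul_eq_mul_left Fintype.card_pos (h.trans ?_)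
  simp only [Fin.val_zero, Fin.val_one, pow_zero, pow_one]
  rw [sq, ← Nat.mul_sub_one]
  ring

variable (p : ℕ) [CharP F p]

theorem isPGroup_upperUnitriangular : IsPGroup p (upperUnitriangular F) := by
  obtain ⟨n, -, hq⟩ := FiniteField.card F p
  exact IsPGroup.of_card (n := n) (by rw [card_upperUnitriangular, hq])

theorem not_dvd_index_upperUnitriangular : ¬ p ∣ (upperUnitriangular F).index := by
  obtain ⟨n, hp, hq⟩ := FiniteField.card F p
  have hpq : p ∣ Fintype.card F := hq ▸ dvd_pow_self p n.ne_zero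
  have hq0 : 0 < Fintype.card F := Fintype.card_pos
  rw [index_upperUnitriangular, hp.dvd_mul]
  rintro (h | h)
  · have := Nat.dvd_sub (dvd_pow hpq two_ne_zero) h
    rw [Nat.sub_sub_self (Nat.one_le_pow _ _ hq0)] at this
    exact hp.not_dvd_one this
  · have := Nat.dvd_sub hpq h
    rw [Nat.sub_sub_self hq0] at this
    exact hp.not_dvd_one this

theorem exists_conj_upperRightHom_mem [Fact p.Prime] (Q : Sylow p (GL (Fin 2) F)) :
    ∃ g : GL (Fin 2) F, ∀ x, g * upperRightHom x * g⁻¹ ∈ Q := by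
  obtain ⟨g, hg⟩ := MulAction.exists_smul_eq (GL (Fin 2) F)
    ((isPGroup_upperUnitriangular p).toSylow (not_dvd_index_upperUnitriangular p)) Q
  refine ⟨g, fun x ↦ ?_⟩
  rw [← hg]
  exact Subgroup.smul_mem_pointwise_smul _ (MulAut.conj g) _ ⟨x, rfl⟩

end FiniteField

theorem statement8 (p : ℕ) (hp : p.Prime) (F : Type) [Field F] [Fintype F] [CharP F p]
    (G : Subgroup (GL (Fin 2) F))
    -- `G` contains a Sylow `p`-subgroup of `GL₂(F)`
    (hsyl : ∃ Q : Sylow p (GL (Fin 2) F), (Q : Subgroup (GL (Fin 2) F)) ≤ G)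
    -- `G` acts irreducibly on `F²`
    (hirr : ∀ W : Submodule F (Fin 2 → F),
      (∀ A ∈ G, ∀ v ∈ W, (A : Matrix (Fin 2) (Fin 2) F).mulVec v ∈ W) → W = ⊥ ∨ W = ⊤) :
    -- `SL₂(F) ⊆ G`
    ∀ A : GL (Fin 2) F, (A : Matrix (Fin 2) (Fin 2) F).det = 1 → A ∈ G := by
  have : Fact p.Prime := ⟨hp⟩
  obtain ⟨Q, hQG⟩ := hsyl
  obtain ⟨g, hg⟩ := exists_conj_upperRightHom_mem p Q
  obtain ⟨h, hG, h10⟩ := ActsIrreducibly.exists_conj_apply_one_zero_ne_zero hirr g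
  intro A hA
  have hconj := mem_of_det_eq_one_of_upperRightHom_mem
    (H := G.comap (MulAut.conj g).toMonoidHom) (fun x ↦ hQG (hg x))
    (h := g⁻¹ * h * g) (by simpa [mul_assoc] using hG) h10
    (A := g⁻¹ * A * g) (by rw [Units.val_mul, Units.val_mul, det_units_conj', hA])
  simpa [mul_assoc] using hconj
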